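/- For every set M, every team X of assignments into M, and all tuples of variables x̄, ū, v̄ with |ū| = |v̄|: X satisfies the inclusion atom x̄ū ⊆ x̄v̄ if and only if for every tuple ā ∈ M^{|x̄|}, the subteam X(x̄ = ā) satisfies the inclusion atom ū ⊆ v̄. -/

import Mathlib

/-- `X` satisfies the inclusion atom `x̄ ⊆ ȳ` (for tuples of the same length)
if `{s(x̄) : s ∈ X} ⊆ {s(ȳ) : s ∈ X}`. -/
def incAtom {D M : Type*} (X : Set (D → M)) (xs ys : List D) : Prop :=
  ∀ s ∈ X, ∃ s' ∈ X, xs.map s = ys.map s'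

theorem List.map_append_eq_map_append_iff {α β : Type*} {f g : α → β} {l l₁ l₂ : List α} :
    (l ++ l₁).map f = (l ++ l₂).map g ↔ l.map f = l.map g ∧ l₁.map f = l₂.map g := by
  rw [List.map_append, List.map_append]
  refine ⟨fun h ↦ List.append_inj h (by simp), fun ⟨h, h₁⟩ ↦ by rw [h, h₁]⟩

theorem inc_relativize_iff_general {D M : Type*} (X : Set (D → M)) (xs us vs : List D) :
    incAtom X (xs ++ us) (xs ++ vs) ↔
      ∀ a : List M, a.length = xs.length →
        incAtom {s ∈ X | xs.map s = a} us vs := by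
  constructor
  · rintro H a - s ⟨hsX, rfl⟩
    obtain ⟨s', hs'X, heq⟩ := H s hsX
    obtain ⟨hxs, hus⟩ := List.map_append_eq_map_append_iff.mp heq
    exact ⟨s', ⟨hs'X, hxs.symm⟩, hus⟩
  · intro H s hsX
    obtain ⟨s', ⟨hs'X, hxs⟩, hus⟩ := H (xs.map s) (List.length_map _) s ⟨hsX, rfl⟩
    exact ⟨s', hs'X, List.map_append_eq_map_append_iff.mpr ⟨hxs.symm, hus⟩⟩

/-- `X ⊨ x̄ū ⊆ x̄v̄` iff for every tuple `ā ∈ M^{|x̄|}` the subteam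
`X(x̄ = ā)` satisfies `ū ⊆ v̄`. -/
theorem inc_relativize_iff {D M : Type*} (X : Set (D → M)) (xs us vs : List D)
    (h : us.length = vs.length) :
    incAtom X (xs ++ us) (xs ++ vs) ↔
      ∀ a : List M, a.length = xs.length →
        incAtom {s ∈ X | xs.map s = a} us vs :=
  inc_relativize_iff_general X xs us vs
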